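/- Let v : Finset N → ℝ be a TU coalitional game on a finite nonempty player set N, and let T = {T₁, …, T_l} be a partition of N satisfying: (i) for each i and each pair of disjoint nonempty coalitions S₁, S₂ with S₁ ∪ S₂ ⊆ T_i, v(S₁ ∪ S₂) > v(S₁) + v(S₂); and (ii) for every T-incompatible coalition G, ∑_{i=1}^l v(T_i ∩ G) > v(G). Then T strictly maximizes social welfare among all partitions of N: for every partition P of N with P ≠ T, ∑_{i=1}^l v(T_i) > ∑_{S ∈ P} v(S). -/

import Mathlib

variable {N : Type*} [Fintype N] [DecidableEq N]

/-- `P` is a partition of the player set `N`: a finite collection of pairwise disjoint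
nonempty coalitions whose union is `N`. -/
def IsPartition (P : Finset (Finset N)) : Prop :=
  (∀ S ∈ P, S.Nonempty) ∧
  (P : Set (Finset N)).PairwiseDisjoint id ∧
  P.sup id = Finset.univ

/-- The merge rule: replace coalitions `S₁, …, S_k ∈ P` (`k ≥ 2`) by their union,
applicable when `∑ⱼ v(Sⱼ) < v(⋃ⱼ Sⱼ)`. -/
def MergeStep (v : Finset N → ℝ) (P P' : Finset (Finset N)) : Prop :=
  ∃ F : Finset (Finset N), F ⊆ P ∧ 2 ≤ F.card ∧
    (∑ S ∈ F, v S) < v (F.sup id) ∧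
    P' = (P \ F) ∪ {F.sup id}

/-- The split rule: replace a coalition `⋃ⱼ Sⱼ ∈ P` by pairwise disjoint nonempty
coalitions `S₁, …, S_k` (`k ≥ 2`), applicable when `∑ⱼ v(Sⱼ) > v(⋃ⱼ Sⱼ)`. -/
def SplitStep (v : Finset N → ℝ) (P P' : Finset (Finset N)) : Prop :=
  ∃ U ∈ P, ∃ F : Finset (Finset N), 2 ≤ F.card ∧
    (∀ S ∈ F, S.Nonempty) ∧
    (F : Set (Finset N)).PairwiseDisjoint id ∧
    F.sup id = U ∧
    v U < ∑ S ∈ F, v S ∧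
    P' = (P \ {U}) ∪ F

/-- A coalition `G` is `T`-incompatible for a partition `T` if `G` is contained in no
member of `T`. -/
def Incompatible (T : Finset (Finset N)) (G : Finset N) : Prop :=
  ∀ Ti ∈ T, ¬ G ⊆ Ti

/-!
Split each coalition `S` of `P` along `T` and each member `Ti` of `T` along `P`. Condition (ii)
gives `v S ≤ ∑ᵢ v (Ti ∩ S)`, strictly when `S` is `T`-incompatible and with equality otherwise;
condition (i), applied repeatedly, gives `∑_{S ∈ P} v (Ti ∩ S) ≤ v Ti`, strictly when `Ti` meets
two coalitions of `P`. Exchanging the two sums compares the welfare of `P` with that of `T`. One of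
the two inequalities is strict unless `P` refines `T` without splitting any `Ti`, i.e. `P = T`.
-/

section Superadditive

variable {α : Type*} [DecidableEq α] {v : Finset α → ℝ} {U : Finset α}

lemma add_le_of_disjoint_of_subset (hv0 : v ∅ = 0)
    (hsup : ∀ S₁ S₂ : Finset α, S₁.Nonempty → S₂.Nonempty →
      Disjoint S₁ S₂ → S₁ ∪ S₂ ⊆ U → v S₁ + v S₂ < v (S₁ ∪ S₂))
    {A B : Finset α} (hAB : Disjoint A B) (hsub : A ∪ B ⊆ U) : v A + v B ≤ v (A ∪ B) := by
  rcases A.eq_empty_or_nonempty with rfl | hA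
  · simp [hv0]
  rcases B.eq_empty_or_nonempty with rfl | hB
  · simp [hv0]
  exact (hsup A B hA hB hAB hsub).le

lemma sum_inter_le_inter_sup (hv0 : v ∅ = 0)
    (hsup : ∀ S₁ S₂ : Finset α, S₁.Nonempty → S₂.Nonempty →
      Disjoint S₁ S₂ → S₁ ∪ S₂ ⊆ U → v S₁ + v S₂ < v (S₁ ∪ S₂))
    {P : Finset (Finset α)} (hP : (P : Set (Finset α)).PairwiseDisjoint id) :
    ∑ S ∈ P, v (U ∩ S) ≤ v (U ∩ P.sup id) := by
  induction P using Finset.induction_on with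
  | empty => simp [hv0]
  | insert A P hA ih =>
    have hsub : P ⊆ insert A P := Finset.subset_insert _ _
    have hdisj : Disjoint (U ∩ A) (U ∩ P.sup id) :=
      (hP.supIndep hsub (Finset.mem_insert_self _ _) hA).mono inf_le_right inf_le_right
    calc ∑ S ∈ insert A P, v (U ∩ S)
        = v (U ∩ A) + ∑ S ∈ P, v (U ∩ S) := Finset.sum_insert hA
      _ ≤ v (U ∩ A) + v (U ∩ P.sup id) := by
        gcongr; exact ih (hP.subset (Finset.coe_subset.2 hsub))
      _ ≤ v (U ∩ A ∪ U ∩ P.sup id) :=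
        add_le_of_disjoint_of_subset hv0 hsup hdisj
          (Finset.union_subset Finset.inter_subset_left Finset.inter_subset_left)
      _ = v (U ∩ (insert A P).sup id) := by
        rw [Finset.sup_insert, ← Finset.inter_union_distrib_left]; rfl

lemma sum_inter_lt_inter_sup (hv0 : v ∅ = 0)
    (hsup : ∀ S₁ S₂ : Finset α, S₁.Nonempty → S₂.Nonempty →
      Disjoint S₁ S₂ → S₁ ∪ S₂ ⊆ U → v S₁ + v S₂ < v (S₁ ∪ S₂))
    {P : Finset (Finset α)} (hP : (P : Set (Finset α)).PairwiseDisjoint id)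
    {S₁ S₂ : Finset α} (h₁ : S₁ ∈ P) (h₂ : S₂ ∈ P) (hne : S₁ ≠ S₂)
    (hU₁ : (U ∩ S₁).Nonempty) (hU₂ : (U ∩ S₂).Nonempty) :
    ∑ S ∈ P, v (U ∩ S) < v (U ∩ P.sup id) := by
  set Q := P.erase S₁
  have hdisj : Disjoint (U ∩ S₁) (U ∩ Q.sup id) :=
    (hP.supIndep (Finset.erase_subset _ _) h₁ (Finset.notMem_erase _ _)).mono
      inf_le_right inf_le_right
  have hUQ : (U ∩ Q.sup id).Nonempty :=
    hU₂.mono (Finset.inter_subset_inter_left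
      (Finset.le_sup (f := id) (Finset.mem_erase.2 ⟨hne.symm, h₂⟩)))
  calc ∑ S ∈ P, v (U ∩ S)
      = v (U ∩ S₁) + ∑ S ∈ Q, v (U ∩ S) := (Finset.add_sum_erase P _ h₁).symm
    _ ≤ v (U ∩ S₁) + v (U ∩ Q.sup id) := by
      gcongr; exact sum_inter_le_inter_sup hv0 hsup (hP.subset (Finset.erase_subset _ _))
    _ < v (U ∩ S₁ ∪ U ∩ Q.sup id) :=
      hsup _ _ hU₁ hUQ hdisj
        (Finset.union_subset Finset.inter_subset_left Finset.inter_subset_left)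
    _ = v (U ∩ P.sup id) := by
      conv_rhs => rw [← Finset.insert_erase h₁]
      rw [Finset.sup_insert, ← Finset.inter_union_distrib_left]; rfl

lemma sum_inter_eq_of_subset (hv0 : v ∅ = 0) {T : Finset (Finset α)}
    (hT : (T : Set (Finset α)).PairwiseDisjoint id) {S Tj : Finset α} (hTj : Tj ∈ T)
    (hS : S ⊆ Tj) : ∑ Ti ∈ T, v (Ti ∩ S) = v S := by
  rw [Finset.sum_eq_single_of_mem Tj hTj, Finset.inter_eq_right.2 hS]
  intro Ti hTi hne
  have hdisj : Disjoint Ti S := (hT hTi hTj hne).mono_right hS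
  rw [Finset.disjoint_iff_inter_eq_empty.1 hdisj, hv0]

end Superadditive

namespace IsPartition

variable {P T : Finset (Finset N)}

lemma exists_mem (hP : IsPartition P) (x : N) : ∃ S ∈ P, x ∈ S :=
  Finset.mem_sup.1 (hP.2.2 ▸ Finset.mem_univ x)

lemma eq_of_subset (hP : IsPartition P) (hT : IsPartition T) (h : P ⊆ T) : P = T := by
  refine Finset.Subset.antisymm h fun Ti hTi ↦ ?_
  obtain ⟨x, hx⟩ := hT.1 Ti hTi
  obtain ⟨S, hS, hxS⟩ := hP.exists_mem x
  obtain rfl : S = Ti := by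
    by_contra hne
    exact Finset.disjoint_left.1 (hT.2.1 (h hS) hTi hne) hxS hx
  exact hS

lemma exists_split_of_refines (hP : IsPartition P) (hT : IsPartition T)
    (href : ∀ S ∈ P, ∃ Ti ∈ T, S ⊆ Ti) (hne : P ≠ T) :
    ∃ Ti ∈ T, ∃ S₁ ∈ P, ∃ S₂ ∈ P, S₁ ≠ S₂ ∧ (Ti ∩ S₁).Nonempty ∧ (Ti ∩ S₂).Nonempty := by
  by_contra! hsplit
  refine hne (hP.eq_of_subset hT fun S hS ↦ ?_)
  obtain ⟨Ti, hTi, hSTi⟩ := href S hS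
  suffices Ti ⊆ S from Finset.Subset.antisymm hSTi this ▸ hTi
  intro y hy
  obtain ⟨S', hS', hyS'⟩ := hP.exists_mem y
  obtain rfl : S = S' := by
    by_contra hSS'
    obtain ⟨x, hx⟩ := hP.1 S hS
    exact Finset.not_nonempty_iff_eq_empty.2 (hsplit Ti hTi S hS S' hS' hSS'
      ⟨x, Finset.mem_inter.2 ⟨hSTi hx, hx⟩⟩) ⟨y, Finset.mem_inter.2 ⟨hy, hyS'⟩⟩
  exact hyS'

end IsPartition

theorem dc_stable_maximizes_welfare_general
    (v : Finset N → ℝ) (hv0 : v ∅ = 0)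
    (T : Finset (Finset N)) (hT : IsPartition T)
    (hcond1 : ∀ Ti ∈ T, ∀ S₁ S₂ : Finset N, S₁.Nonempty → S₂.Nonempty →
      Disjoint S₁ S₂ → S₁ ∪ S₂ ⊆ Ti → v S₁ + v S₂ < v (S₁ ∪ S₂))
    (hcond2 : ∀ G : Finset N, Incompatible T G → v G < ∑ Ti ∈ T, v (Ti ∩ G)) :
    ∀ P : Finset (Finset N), IsPartition P → P ≠ T →
      ∑ S ∈ P, v S < ∑ Ti ∈ T, v Ti := by
  intro P hP hPT
  have hcol : ∀ S ∈ P, v S ≤ ∑ Ti ∈ T, v (Ti ∩ S) := fun S _ ↦ by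
    by_cases hS : Incompatible T S
    · exact (hcond2 S hS).le
    · obtain ⟨Tj, hTj, hSTj⟩ : ∃ Tj ∈ T, S ⊆ Tj := by simpa [Incompatible] using hS
      exact (sum_inter_eq_of_subset hv0 hT.2.1 hTj hSTj).ge
  have hrow : ∀ Ti ∈ T, ∑ S ∈ P, v (Ti ∩ S) ≤ v Ti := fun Ti hTi ↦
    (sum_inter_le_inter_sup hv0 (hcond1 Ti hTi) hP.2.1).trans_eq
      (by rw [hP.2.2, Finset.inter_univ])
  by_cases hinc : ∃ S ∈ P, Incompatible T S
  · obtain ⟨S, hS, hSinc⟩ := hinc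
    calc ∑ S ∈ P, v S < ∑ S ∈ P, ∑ Ti ∈ T, v (Ti ∩ S) :=
          Finset.sum_lt_sum hcol ⟨S, hS, hcond2 S hSinc⟩
      _ = ∑ Ti ∈ T, ∑ S ∈ P, v (Ti ∩ S) := Finset.sum_comm
      _ ≤ ∑ Ti ∈ T, v Ti := Finset.sum_le_sum hrow
  · have href : ∀ S ∈ P, ∃ Ti ∈ T, S ⊆ Ti := by simpa [Incompatible] using hinc
    obtain ⟨Ti, hTi, S₁, h₁, S₂, h₂, hne, hS₁, hS₂⟩ := hP.exists_split_of_refines hT href hPT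
    have hsplit : ∑ S ∈ P, v (Ti ∩ S) < v Ti :=
      (sum_inter_lt_inter_sup hv0 (hcond1 Ti hTi) hP.2.1 h₁ h₂ hne hS₁ hS₂).trans_eq
        (by rw [hP.2.2, Finset.inter_univ])
    calc ∑ S ∈ P, v S ≤ ∑ S ∈ P, ∑ Ti ∈ T, v (Ti ∩ S) := Finset.sum_le_sum hcol
      _ = ∑ Ti ∈ T, ∑ S ∈ P, v (Ti ∩ S) := Finset.sum_comm
      _ < ∑ Ti ∈ T, v Ti := Finset.sum_lt_sum hrow ⟨Ti, hTi, hsplit⟩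

/-- **A strictly `D_c`-stable partition strictly maximizes social welfare.** Let `v` be a
TU coalitional game on a finite nonempty player set `N` and let `T` be a partition of `N`
satisfying: (i) for each member `Ti` of `T` and each pair of disjoint nonempty coalitions
`S₁, S₂` with `S₁ ∪ S₂ ⊆ Ti`, `v (S₁ ∪ S₂) > v S₁ + v S₂`; and (ii) for every
`T`-incompatible coalition `G`, `∑_{Ti ∈ T} v (Ti ∩ G) > v G`. Then for every partition
`P` of `N` with `P ≠ T`, `∑_{Ti ∈ T} v Ti > ∑_{S ∈ P} v S`. -/
theorem dc_stable_maximizes_welfare [Nonempty N]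
    (v : Finset N → ℝ) (hv0 : v ∅ = 0)
    (T : Finset (Finset N)) (hT : IsPartition T)
    (hcond1 : ∀ Ti ∈ T, ∀ S₁ S₂ : Finset N, S₁.Nonempty → S₂.Nonempty →
      Disjoint S₁ S₂ → S₁ ∪ S₂ ⊆ Ti → v S₁ + v S₂ < v (S₁ ∪ S₂))
    (hcond2 : ∀ G : Finset N, Incompatible T G → v G < ∑ Ti ∈ T, v (Ti ∩ G)) :
    ∀ P : Finset (Finset N), IsPartition P → P ≠ T →
      ∑ S ∈ P, v S < ∑ Ti ∈ T, v Ti :=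
  dc_stable_maximizes_welfare_general v hv0 T hT hcond1 hcond2
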